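/- For n = 2k+2 even, the function 𝓗_{k+1} = A + 1/A with A = √((c₂c₄⋯c_{2k+2})/(c₁c₃⋯c_{2k+1})) is a Casimir of the quadratic Volterra Poisson tensor P^{ij} = cᵢcⱼ(δ_{i+1,j} - δ_{j+1,i}): Σⱼ P^{ij} ∂𝓗_{k+1}/∂cⱼ = 0 for all i. -/

import Mathlib

open scoped BigOperators

/-- Partial derivative of a function on `ℝ^n` in the `i`-th coordinate direction. -/
noncomputable def pderiv {n : ℕ} (i : Fin n) (f : (Fin n → ℝ) → ℝ) (x : Fin n → ℝ) : ℝ :=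
  fderiv ℝ f x (Pi.single i 1)

/-- The Jacobi identity for a bivector field written in coordinates. -/
def JacobiId {n : ℕ} (P : (Fin n → ℝ) → Fin n → Fin n → ℝ) : Prop :=
  ∀ x i j k, ∑ l, (P x l j * pderiv l (fun y => P y i k) x
    + P x l i * pderiv l (fun y => P y k j) x
    + P x l k * pderiv l (fun y => P y j i) x) = 0

/-- Kronecker delta on `Fin n`, valued in `ℝ`. -/
def kdelta {n : ℕ} (i j : Fin n) : ℝ := if i = j then 1 else 0

/-- The quadratic Poisson tensor of the periodic `n`-site Volterra lattice:
`P^{ij} = cᵢ cⱼ (δ_{i+1,j} - δ_{j+1,i})`, indices mod `n`. -/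
def Pvolt {n : ℕ} [NeZero n] (c : Fin n → ℝ) (i j : Fin n) : ℝ :=
  c i * c j * (kdelta (i + 1) j - kdelta (j + 1) i)

/-- The cubic Poisson tensor of the periodic `n`-site Volterra lattice. -/
def Qvolt {n : ℕ} [NeZero n] (c : Fin n → ℝ) (i j : Fin n) : ℝ :=
  c i * c j * (c i + c j) * (kdelta (i + 1) j - kdelta (j + 1) i)
    + c i * c (i + 1) * c (i + 2) * kdelta (i + 2) j
    - c i * c (i - 1) * c (i - 2) * kdelta (i - 2) j

/-- The index of `cₙ` (the last coordinate) in `Fin n`. -/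
def lastI (n : ℕ) [NeZero n] : Fin n := (0 : Fin n) - 1

/-- The vector field `Z₀ = c₁ ∂/∂c₁ + cₙ ∂/∂cₙ` (components). -/
def Z0 {n : ℕ} [NeZero n] (x : Fin n → ℝ) (i : Fin n) : ℝ :=
  if i = 0 then x i else if i = lastI n then x i else 0

/-- Lie derivative of a bivector field `P` along a vector field `Z`, in coordinates:
`(L_Z P)^{ij} = Σₗ (Zˡ ∂ₗ P^{ij} − P^{lj} ∂ₗ Zⁱ − P^{il} ∂ₗ Zʲ)`. -/
noncomputable def lieDerivBivector {n : ℕ} (Z : (Fin n → ℝ) → Fin n → ℝ)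
    (P : (Fin n → ℝ) → Fin n → Fin n → ℝ) (x : Fin n → ℝ) (i j : Fin n) : ℝ :=
  ∑ l, (Z x l * pderiv l (fun y => P y i j) x
    - P x l j * pderiv l (fun y => Z y i) x
    - P x i l * pderiv l (fun y => Z y j) x)

/-- The "totally disconnected" elementary polynomial `Jᵢ`: the sum, over all `i`-element
subsets of `ℤ/nℤ` containing no two cyclically adjacent indices, of the corresponding
monomials. -/
def Jpoly {n : ℕ} [NeZero n] (i : ℕ) (c : Fin n → ℝ) : ℝ :=
  ∑ S ∈ Finset.univ.filter
      (fun S : Finset (Fin n) => S.card = i ∧ ∀ a ∈ S, a + 1 ∉ S),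
    ∏ l ∈ S, c l

/-- For `n = 2k+2`, the function `A = √((c₂c₄⋯c_{2k+2})/(c₁c₃⋯c_{2k+1}))`
(indices are 1-based; in `Fin (2k+2)` the 1-based index `m` is `m-1`). -/
noncomputable def Afun (k : ℕ) (x : Fin (2 * k + 2) → ℝ) : ℝ :=
  Real.sqrt ((∏ i : Fin (k + 1), x ⟨2 * (i : ℕ) + 1, by have := i.isLt; omega⟩)
    / (∏ i : Fin (k + 1), x ⟨2 * (i : ℕ), by have := i.isLt; omega⟩))

/-- The extra Hamiltonian `𝓗_{k+1} = A + 1/A` of the even Volterra lattice. -/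
noncomputable def lastHam (k : ℕ) (x : Fin (2 * k + 2) → ℝ) : ℝ :=
  Afun k x + (Afun k x)⁻¹

/-! `𝓗 = φ (r)` with `φ t = √t + 1/√t` and `r` the product of the odd-indexed (0-based)
coordinates over the product of the even-indexed ones. Hence the Euler term `x j * ∂_j 𝓗` sees
only the parity of `j`: it equals `± r φ'(r) = ±(A - A⁻¹)/2`. Contracting with the Volterra bracket
gives `x i (x (i+1) ∂_{i+1} 𝓗 - x (i-1) ∂_{i-1} 𝓗)`, which vanishes because, `n` being even,
`i + 1` and `i - 1` have the same parity even across the wrap-around. -/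

section PartialDerivatives

variable {n : ℕ} {f g : (Fin n → ℝ) → ℝ} {x : Fin n → ℝ} (j : Fin n)

theorem HasFDerivAt.pderiv_eq {f' : (Fin n → ℝ) →L[ℝ] ℝ} (h : HasFDerivAt f f' x) :
    pderiv j f x = f' (Pi.single j 1) := by
  rw [pderiv, h.fderiv]

theorem pderiv_comp_of_hasDerivAt {φ : ℝ → ℝ} {φ' : ℝ} (hφ : HasDerivAt φ φ' (f x))
    (hf : DifferentiableAt ℝ f x) : pderiv j (fun y => φ (f y)) x = φ' * pderiv j f x :=
  (hφ.comp_hasFDerivAt x hf.hasFDerivAt).pderiv_eq j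

theorem pderiv_div (hf : DifferentiableAt ℝ f x) (hg : DifferentiableAt ℝ g x) (hgx : g x ≠ 0) :
    pderiv j (fun y => f y / g y) x
      = (pderiv j f x * g x - f x * pderiv j g x) / g x ^ 2 := by
  have hinv : HasFDerivAt (fun y => (g y)⁻¹) (-(g x ^ 2)⁻¹ • fderiv ℝ g x) x :=
    (hasDerivAt_inv hgx).comp_hasFDerivAt x hg.hasFDerivAt
  simp only [div_eq_mul_inv]
  rw [(hf.hasFDerivAt.fun_mul hinv).pderiv_eq, pderiv, pderiv]
  simp only [add_apply, smul_apply, smul_eq_mul, neg_mul, mul_neg]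
  field_simp
  ring

theorem mul_pderiv_prod_coord (s : Finset (Fin n)) (x : Fin n → ℝ) :
    x j * pderiv j (fun y => ∏ i ∈ s, y i) x = if j ∈ s then ∏ i ∈ s, x i else 0 := by
  classical
  rw [(HasFDerivAt.finsetProd fun i _ => hasFDerivAt_apply i x).pderiv_eq]
  simp only [sum_apply, smul_apply, ContinuousLinearMap.proj_apply, Pi.single_apply, smul_eq_mul,
    mul_ite, mul_one, mul_zero, Finset.sum_ite_eq']
  split_ifs with hj
  · exact Finset.mul_prod_erase s x hj
  · rfl

theorem mul_pderiv_div_prod_coord (s t : Finset (Fin n)) (ht : ∏ i ∈ t, x i ≠ 0) :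
    x j * pderiv j (fun y => (∏ i ∈ s, y i) / ∏ i ∈ t, y i) x
      = ((if j ∈ s then 1 else 0) - if j ∈ t then 1 else 0) * ((∏ i ∈ s, x i) / ∏ i ∈ t, x i) := by
  have hdiff (u : Finset (Fin n)) : DifferentiableAt ℝ (fun y : Fin n → ℝ => ∏ i ∈ u, y i) x := by
    fun_prop
  have hnum := mul_pderiv_prod_coord j s x
  have hden := mul_pderiv_prod_coord j t x
  rw [pderiv_div j (hdiff s) (hdiff t) ht]
  calc x j * ((pderiv j _ x * _ - _ * pderiv j _ x) / _ ^ 2) = _ := by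
        rw [mul_div_assoc', mul_sub, ← mul_assoc, mul_left_comm, hnum, hden]
    _ = _ := by split_ifs <;> field_simp <;> ring

end PartialDerivatives

theorem Fin.odd_val_add_one_iff {k : ℕ} (i : Fin (2 * k + 2)) :
    Odd ((i + 1 : Fin (2 * k + 2)) : ℕ) ↔ ¬ Odd (i : ℕ) := by
  rw [Fin.val_add_one]
  split_ifs with h
  · subst h; simp [Fin.val_last]
  · simp [Nat.odd_add_one]

theorem Fin.odd_val_sub_one_iff {k : ℕ} (i : Fin (2 * k + 2)) :
    Odd ((i - 1 : Fin (2 * k + 2)) : ℕ) ↔ ¬ Odd (i : ℕ) := by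
  rw [← not_iff_not, not_not, ← Fin.odd_val_add_one_iff, sub_add_cancel]

theorem sum_Pvolt_mul {n : ℕ} [NeZero n] (c v : Fin n → ℝ) (i : Fin n) :
    ∑ j, Pvolt c i j * v j = c i * (c (i + 1) * v (i + 1) - c (i - 1) * v (i - 1)) := by
  have hsub (j : Fin n) : j + 1 = i ↔ j = i - 1 := eq_sub_iff_add_eq.symm
  simp only [Pvolt, kdelta, hsub, mul_sub, sub_mul, Finset.sum_sub_distrib, mul_ite, ite_mul,
    mul_one, mul_zero, zero_mul, Finset.sum_ite_eq, Finset.sum_ite_eq', Finset.mem_univ, if_true]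
  ring

def oddSites (n : ℕ) : Finset (Fin n) := Finset.univ.filter fun j => Odd (j : ℕ)

theorem mem_oddSites {n : ℕ} {j : Fin n} : j ∈ oddSites n ↔ Odd (j : ℕ) := by
  simp [oddSites]

theorem prod_oddSites (k : ℕ) (y : Fin (2 * k + 2) → ℝ) :
    ∏ i : Fin (k + 1), y ⟨2 * (i : ℕ) + 1, by omega⟩ = ∏ j ∈ oddSites (2 * k + 2), y j := by
  refine Finset.prod_nbij' (fun i => ⟨2 * (i : ℕ) + 1, by omega⟩) (fun j => ⟨(j : ℕ) / 2, by omega⟩)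
    ?_ ?_ ?_ ?_ fun _ _ => rfl <;> intro a ha <;>
    simp only [mem_oddSites, Finset.mem_univ, Fin.ext_iff, Nat.odd_iff] at * <;> omega

theorem prod_compl_oddSites (k : ℕ) (y : Fin (2 * k + 2) → ℝ) :
    ∏ i : Fin (k + 1), y ⟨2 * (i : ℕ), by omega⟩ = ∏ j ∈ (oddSites (2 * k + 2))ᶜ, y j := by
  refine Finset.prod_nbij' (fun i => ⟨2 * (i : ℕ), by omega⟩) (fun j => ⟨(j : ℕ) / 2, by omega⟩)
    ?_ ?_ ?_ ?_ fun _ _ => rfl <;> intro a ha <;>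
    simp only [Finset.mem_compl, mem_oddSites, Finset.mem_univ, Fin.ext_iff,
      Nat.odd_iff] at * <;> omega

theorem Afun_eq_sqrt_div (k : ℕ) (y : Fin (2 * k + 2) → ℝ) :
    Afun k y = √((∏ j ∈ oddSites (2 * k + 2), y j) / ∏ j ∈ (oddSites (2 * k + 2))ᶜ, y j) := by
  rw [Afun, prod_oddSites, prod_compl_oddSites]

theorem hasDerivAt_sqrt_add_inv_sqrt {t : ℝ} (ht : 0 < t) :
    HasDerivAt (fun s => √s + (√s)⁻¹) ((√t - (√t)⁻¹) / (2 * t)) t := by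
  have hsqrt := Real.hasDerivAt_sqrt ht.ne'
  have hs : 0 < √t := Real.sqrt_pos.2 ht
  refine (hsqrt.fun_add (hsqrt.inv hs.ne')).congr_deriv ?_
  field_simp
  rw [Real.sq_sqrt ht.le]
  ring

theorem mul_pderiv_lastHam (k : ℕ) (x : Fin (2 * k + 2) → ℝ) (hx : ∀ i, 0 < x i)
    (j : Fin (2 * k + 2)) :
    x j * pderiv j (lastHam k) x
      = (if Odd (j : ℕ) then 1 else -1) * ((Afun k x - (Afun k x)⁻¹) / 2) := by
  set r : (Fin (2 * k + 2) → ℝ) → ℝ := fun y =>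
    (∏ j ∈ oddSites (2 * k + 2), y j) / ∏ j ∈ (oddSites (2 * k + 2))ᶜ, y j with hr
  have hden : ∏ j ∈ (oddSites (2 * k + 2))ᶜ, x j ≠ 0 := (Finset.prod_pos fun i _ => hx i).ne'
  have hrx : 0 < r x := div_pos (Finset.prod_pos fun i _ => hx i) (Finset.prod_pos fun i _ => hx i)
  have hA : Afun k x = √(r x) := Afun_eq_sqrt_div k x
  have hH : lastHam k = fun y => √(r y) + (√(r y))⁻¹ := by
    funext y; rw [lastHam, Afun_eq_sqrt_div]
  have hrdiff : DifferentiableAt ℝ r x := by fun_prop (disch := exact hden)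
  rw [hH, pderiv_comp_of_hasDerivAt j (hasDerivAt_sqrt_add_inv_sqrt hrx) hrdiff, mul_left_comm,
    hr, mul_pderiv_div_prod_coord j _ _ hden, ← hr, hA]
  change _ * (_ * r x) = _
  simp only [Finset.mem_compl, mem_oddSites]
  split_ifs <;> field_simp <;> ring

/-- For `n = 2k+2`, the function `𝓗_{k+1} = A + 1/A` is a Casimir of the quadratic
Volterra Poisson tensor `P`. -/
theorem stmt16 (k : ℕ) (x : Fin (2 * k + 2) → ℝ) (hx : ∀ i, 0 < x i) (i : Fin (2 * k + 2)) :
    ∑ j, Pvolt x i j * pderiv j (lastHam k) x = 0 := by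
  rw [sum_Pvolt_mul, mul_pderiv_lastHam k x hx, mul_pderiv_lastHam k x hx]
  simp only [Fin.odd_val_add_one_iff, Fin.odd_val_sub_one_iff, sub_self, mul_zero]
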